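/- arXiv:0901.3579 — 7 statements merged into one kernel-verified Lean document; each statement's English description precedes it below -/
import Mathlib

section
/- Let A be a C*-algebra with an increasing countable approximate unit (pₙ)_{n∈ℕ} consisting of projections. Then the following are equivalent: (ii) for every projection p ∈ A there exists a projection q ∈ A such that p ∼ q and pq = 0; (iii) for every n ∈ ℕ there exists m > n such that pₙ ≲ pₘ − pₙ. -/
/-!
Two projections `P`, `E` at distance `< 1` are unitarily equivalent in the unitization: the
unitary part of `E P + (1 - E) (1 - P)` intertwines them. Hence they are Murray–von Neumann
equivalent, and the same unitary carries projections orthogonal to `E` to equivalent projections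
orthogonal to `P`. A projection `q` is within `1 / 16` of its compression `pₙ q pₙ` for large `n`,
and functional calculus turns the compression into a projection `e ≤ pₙ` at distance `< 1` from
`q`. For (ii) ⇒ (iii), compress the copy of `pₙ` orthogonal to `pₙ` under `pₘ - pₙ`. For
(iii) ⇒ (ii), the copy of `e` under `pₘ - pₙ` is orthogonal to `e`; move it to a copy orthogonal
to `q`.
-/

/-- A projection in a C*-algebra: a self-adjoint idempotent. -/
def IsProjection {A : Type*} [NonUnitalCStarAlgebra A] (p : A) : Prop :=
  star p = p ∧ p * p = p

/-- Murray–von Neumann equivalence of projections: `p ∼ q` iff there is `v`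
with `v* v = p` and `v v* = q`. -/
def MvNEquiv {A : Type*} [NonUnitalCStarAlgebra A] (p q : A) : Prop :=
  ∃ v : A, star v * v = p ∧ v * star v = q

/-- `p ≲ q`: `p` is equivalent to a subprojection of `q`, i.e. there is `v`
with `v v* = p` and `v* v ≤ q`. -/
def MvNSubEquiv {A : Type*} [NonUnitalCStarAlgebra A] [PartialOrder A]
    (p q : A) : Prop :=
  ∃ v : A, v * star v = p ∧ star v * v ≤ q

open Filter Topology
open scoped CStarAlgebra

theorem isProjection_iff_isStarProjection {A : Type*} [NonUnitalCStarAlgebra A] {p : A} :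
    IsProjection p ↔ IsStarProjection p :=
  and_comm.trans isStarProjection_iff'.symm

section NormedRing
variable {R : Type*} [NonUnitalNormedRing R]

theorem norm_mul_self_sub_le {a q : R} (hq : IsIdempotentElem q) (hq₁ : ‖q‖ ≤ 1)
    (ha₁ : ‖a‖ ≤ 1) : ‖a * a - a‖ ≤ 3 * ‖a - q‖ := by
  have key : a * a - a = a * (a - q) + (a - q) * q - (a - q) := by
    rw [mul_sub, sub_mul, hq.eq]; abel
  calc ‖a * a - a‖ ≤ ‖a * (a - q)‖ + ‖(a - q) * q‖ + ‖a - q‖ := by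
        rw [key]; grw [norm_sub_le, norm_add_le]
  _ ≤ ‖a‖ * ‖a - q‖ + ‖a - q‖ * ‖q‖ + ‖a - q‖ := by gcongr <;> exact norm_mul_le _ _
  _ ≤ 3 * ‖a - q‖ := by nlinarith [norm_nonneg (a - q)]

theorem tendsto_mul_mul_of_norm_le_one {ι : Type*} {l : Filter ι} {p : ι → R} {a : R}
    (hp : ∀ i, ‖p i‖ ≤ 1) (hl : Tendsto (fun i => p i * a) l (𝓝 a))
    (hr : Tendsto (fun i => a * p i) l (𝓝 a)) : Tendsto (fun i => p i * a * p i) l (𝓝 a) := by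
  rw [tendsto_iff_norm_sub_tendsto_zero] at hl hr ⊢
  refine squeeze_zero (fun _ => norm_nonneg _) (fun i => ?_) (by simpa using hr.add hl)
  calc ‖p i * a * p i - a‖ = ‖p i * (a * p i - a) + (p i * a - a)‖ := by noncomm_ring
  _ ≤ ‖p i‖ * ‖a * p i - a‖ + ‖p i * a - a‖ := by grw [norm_add_le, norm_mul_le]
  _ ≤ ‖a * p i - a‖ + ‖p i * a - a‖ := by
        gcongr; exact mul_le_of_le_one_left (norm_nonneg _) (hp i)

theorem exists_ge_norm_mul_mul_sub_lt {p : ℕ → R} (hp : ∀ n, ‖p n‖ ≤ 1)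
    (hl : ∀ a, Tendsto (fun n => p n * a) atTop (𝓝 a))
    (hr : ∀ a, Tendsto (fun n => a * p n) atTop (𝓝 a)) (a : R) {ε : ℝ} (hε : 0 < ε) (N : ℕ) :
    ∃ n ≥ N, ‖p n * a * p n - a‖ < ε := by
  obtain ⟨M, hM⟩ := Metric.tendsto_atTop.mp (tendsto_mul_mul_of_norm_le_one hp (hl a) (hr a)) ε hε
  exact ⟨max N M, le_max_left _ _, by simpa [dist_eq_norm] using hM _ (le_max_right _ _)⟩

variable [StarRing R] [CStarRing R]

theorem mul_star_mul_self_of_isIdempotentElem {v : R} (h : IsIdempotentElem (star v * v)) :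
    v * (star v * v) = v := by
  set k := star v * v
  have : star (v * k - v) * (v * k - v) = 0 := by
    calc star (v * k - v) * (v * k - v) = k * k * k - k * k - k * k + k := by
          simp only [k, star_sub, star_mul, star_star]; noncomm_ring
    _ = 0 := by rw [h.eq, h.eq]; abel
  exact sub_eq_zero.mp ((CStarRing.star_mul_self_eq_zero_iff _).mp this)

end NormedRing

theorem IsStarProjection.exists_isStarNormal_star_mul_self_eq {R : Type*} [Ring R] [StarRing R]
    {P E : R} (hP : IsStarProjection P) (hE : IsStarProjection E) :
    ∃ x : R, IsStarNormal x ∧ star x * x = 1 - (P - E) * (P - E) ∧ x * P = E * x := by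
  have hP' := hP.isIdempotentElem.eq
  have hE' := hE.isIdempotentElem.eq
  have hPP : ∀ y : R, y * P * P = y * P := fun y => by rw [mul_assoc, hP']
  have hEE : ∀ y : R, y * E * E = y * E := fun y => by rw [mul_assoc, hE']
  have hstar : star (E * P + (1 - E) * (1 - P)) = P * E + (1 - P) * (1 - E) := by
    simp [hP.isSelfAdjoint.star_eq, hE.isSelfAdjoint.star_eq]
  refine ⟨E * P + (1 - E) * (1 - P), ⟨?_⟩, ?_, ?_⟩
  · rw [commute_iff_eq, hstar]
    simp only [sub_mul, mul_sub, add_mul, mul_add, one_mul, mul_one, ← mul_assoc, hP', hE', hPP,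
      hEE]
    abel
  · rw [hstar]
    simp only [sub_mul, mul_sub, add_mul, mul_add, one_mul, mul_one, ← mul_assoc, hP', hE', hEE]
    abel
  · have hxP : (E * P + (1 - E) * (1 - P)) * P = E * P := by
      simp only [add_mul, mul_assoc, hP', hP.one_sub_mul_self, mul_zero, add_zero]
    have hEx : E * (E * P + (1 - E) * (1 - P)) = E * P := by
      simp only [mul_add, ← mul_assoc, hE', hE.mul_one_sub_self, zero_mul, add_zero]
    rw [hxP, hEx]

section Unital
variable {B : Type*} [CStarAlgebra B] [PartialOrder B] [StarOrderedRing B]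

theorem exists_mem_unitary_mul_eq_mul_of_isStarNormal {x P E : B} (hx : IsStarNormal x)
    (hxx : IsUnit (star x * x)) (hP : IsSelfAdjoint P) (hE : IsSelfAdjoint E)
    (h : x * P = E * x) : ∃ u ∈ unitary B, u * P = E * u := by
  set d := star x * x
  have hd : IsStrictlyPositive d :=
    IsStrictlyPositive.iff_of_unital.mpr ⟨star_mul_self_nonneg x, hxx⟩
  have hPx : P * star x = star x * E := by
    simpa [hP.star_eq, hE.star_eq] using congr(star $h)
  have hdP : Commute d P := by
    rw [commute_iff_eq, mul_assoc, h, ← mul_assoc, ← hPx, mul_assoc]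
  have hdx : Commute d x := by
    change star x * x * x = x * (star x * x)
    rw [← mul_assoc x, ← hx.star_comm_self.eq]
  set s : B := d ^ (-(1 / 2) : ℝ)
  have hs : IsSelfAdjoint s := CFC.rpow_nonneg.isSelfAdjoint
  have hss : s * s * d = 1 := by
    calc s * s * d = d ^ (-(1 / 2) + -(1 / 2) + 1 : ℝ) := by
          rw [CFC.rpow_add hd.isUnit, CFC.rpow_add hd.isUnit, CFC.rpow_one d hd.nonneg]
    _ = 1 := by norm_num [CFC.rpow_zero d hd.nonneg]
  have hsP : Commute s P := hdP.cfc_nnreal _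
  have hsx : Commute s x := hdx.cfc_nnreal _
  have hsd : Commute s d := (Commute.refl d).cfc_nnreal _
  -- `x * s` is the unitary part of the polar decomposition of `x`
  refine ⟨x * s, Unitary.mem_iff.mpr ⟨?_, ?_⟩, ?_⟩
  · calc star (x * s) * (x * s) = s * d * s := by
          rw [star_mul, hs.star_eq]; simp only [d, mul_assoc]
    _ = 1 := by rw [mul_assoc, ← hsd.eq, ← mul_assoc, hss]
  · calc x * s * star (x * s) = x * (s * s) * star x := by
          rw [star_mul, hs.star_eq]; simp only [mul_assoc]
    _ = 1 := by
      rw [← (hsx.mul_left hsx).eq, mul_assoc (s * s), ← hx.star_comm_self.eq, hss]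
  · rw [mul_assoc, hsP.eq, ← mul_assoc, h, mul_assoc]

theorem exists_mem_unitary_mul_eq_mul_of_norm_sub_lt_one {P E : B} (hP : IsStarProjection P)
    (hE : IsStarProjection E) (h : ‖P - E‖ < 1) : ∃ u ∈ unitary B, u * P = E * u := by
  obtain ⟨x, hx, hxx, hxP⟩ := hP.exists_isStarNormal_star_mul_self_eq hE
  have hk : ‖(P - E) * (P - E)‖ < 1 :=
    (norm_mul_le _ _).trans_lt (by nlinarith [norm_nonneg (P - E)])
  exact exists_mem_unitary_mul_eq_mul_of_isStarNormal hx (hxx ▸ isUnit_one_sub_of_norm_lt_one hk)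
    hP.isSelfAdjoint hE.isSelfAdjoint hxP
end Unital

namespace MvNEquiv
variable {A : Type*} [NonUnitalCStarAlgebra A] {p q r : A}

theorem symm (h : MvNEquiv p q) : MvNEquiv q p := by
  obtain ⟨v, hv₁, hv₂⟩ := h
  exact ⟨star v, by rwa [star_star], by rwa [star_star]⟩

theorem trans (hp : IsIdempotentElem p) (hr : IsIdempotentElem r) (hpq : MvNEquiv p q)
    (hqr : MvNEquiv q r) : MvNEquiv p r := by
  obtain ⟨v, hv₁, hv₂⟩ := hpq
  obtain ⟨w, hw₁, hw₂⟩ := hqr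
  refine ⟨w * v, ?_, ?_⟩
  · calc star (w * v) * (w * v) = star v * (star w * w) * v := by rw [star_mul]; noncomm_ring
    _ = star v * v * (star v * v) := by rw [hw₁, ← hv₂]; noncomm_ring
    _ = p := by rw [hv₁, hp.eq]
  · calc w * v * star (w * v) = w * (v * star v) * star w := by rw [star_mul]; noncomm_ring
    _ = w * star w * (w * star w) := by rw [hv₂, ← hw₁]; noncomm_ring
    _ = r := by rw [hw₂, hr.eq]

theorem isStarProjection (hp : IsIdempotentElem p) (h : MvNEquiv p q) : IsStarProjection q := by
  obtain ⟨v, rfl, rfl⟩ := h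
  exact ⟨isIdempotentElem_star_mul_self_iff_isIdempotentElem_self_mul_star.mp hp,
    .mul_star_self v⟩

theorem of_mem_unitary {B : Type*} [CStarAlgebra B] {P Q u : B} (hP : IsStarProjection P)
    (hu : u ∈ unitary B) (h : u * P = Q * u) : MvNEquiv P Q := by
  refine ⟨u * P, ?_, ?_⟩
  · rw [star_mul, hP.isSelfAdjoint.star_eq, mul_assoc, ← mul_assoc (star u),
      Unitary.star_mul_self_of_mem hu, one_mul, hP.isIdempotentElem.eq]
  · rw [star_mul, hP.isSelfAdjoint.star_eq, mul_assoc, ← mul_assoc P, hP.isIdempotentElem.eq,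
      ← mul_assoc, h, mul_assoc, Unitary.mul_star_self_of_mem hu, mul_one]

theorem of_inr (hp : IsIdempotentElem p) (h : MvNEquiv (p : A⁺¹) (q : A⁺¹)) : MvNEquiv p q := by
  obtain ⟨v, hv₁, hv₂⟩ := h
  have hvv : IsIdempotentElem (star v * v) := hv₁ ▸ (Unitization.isIdempotentElem_inr_iff ℂ).mpr hp
  have hv : v * p = v := hv₁ ▸ mul_star_mul_self_of_isIdempotentElem hvv
  have hfst : v.fst = 0 := by simpa using congr_arg (·.fst) hv.symm
  lift v to A using hfst
  refine ⟨v, Unitization.inr_injective (R := ℂ) ?_, Unitization.inr_injective (R := ℂ) ?_⟩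
  · rw [Unitization.inr_mul, Unitization.inr_star, hv₁]
  · rw [Unitization.inr_mul, Unitization.inr_star, hv₂]

end MvNEquiv

theorem lt_quarter_or_three_quarters_lt_of_abs_mul_self_sub_le {t δ : ℝ}
    (ht : |t * t - t| ≤ δ) (hδ : δ < 3 / 16) :
    (t < 1 / 4 ∧ |t| ≤ 2 * δ) ∨ (3 / 4 < t ∧ |t - 1| ≤ 2 * δ) := by
  rw [abs_le] at ht
  rcases lt_or_ge t (1 / 4) with h₁ | h₁
  · exact .inl ⟨h₁, abs_le.mpr ⟨by nlinarith, by nlinarith⟩⟩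
  rcases le_or_gt t (3 / 4) with h₂ | h₂
  · nlinarith
  · exact .inr ⟨h₂, abs_le.mpr ⟨by nlinarith, by nlinarith⟩⟩

section NonUnital
variable {A : Type*} [NonUnitalCStarAlgebra A]

theorem exists_mem_unitary_mul_inr_eq {p e : A} (hp : IsStarProjection p)
    (he : IsStarProjection e) (h : ‖p - e‖ < 1) :
    ∃ u ∈ unitary A⁺¹, u * (p : A⁺¹) = e * u :=
  exists_mem_unitary_mul_eq_mul_of_norm_sub_lt_one hp.inr he.inr
    (by rwa [← Unitization.inr_sub, Unitization.norm_inr])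

theorem MvNEquiv.of_norm_sub_lt_one {p q : A} (hp : IsStarProjection p)
    (hq : IsStarProjection q) (h : ‖p - q‖ < 1) : MvNEquiv p q := by
  obtain ⟨u, hu, hup⟩ := exists_mem_unitary_mul_inr_eq hp hq h
  exact .of_inr hp.isIdempotentElem (.of_mem_unitary hp.inr hu hup)

theorem exists_mvNEquiv_mul_eq_zero_of_norm_sub_lt_one {p e r : A} (hp : IsStarProjection p)
    (he : IsStarProjection e) (hr : IsStarProjection r) (h : ‖p - e‖ < 1) (her : e * r = 0) :
    ∃ r', IsStarProjection r' ∧ MvNEquiv r r' ∧ p * r' = 0 := by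
  obtain ⟨u, hu, hup⟩ := exists_mem_unitary_mul_inr_eq hp he h
  obtain ⟨r', hr'⟩ : ∃ r' : A, (r' : A⁺¹) = star u * r * u := CanLift.prf _ (by simp)
  have hconj : star u * (r : A⁺¹) = r' * star u := by
    rw [hr', mul_assoc, Unitary.mul_star_self_of_mem hu, mul_one]
  have hrr' : MvNEquiv r r' :=
    .of_inr hr.isIdempotentElem (.of_mem_unitary hr.inr (Unitary.star_mem hu) hconj)
  have hpu : (p : A⁺¹) * star u = star u * e := by
    simpa [hp.inr.isSelfAdjoint.star_eq, he.inr.isSelfAdjoint.star_eq] using congr(star $hup)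
  refine ⟨r', hrr'.isStarProjection hr.isIdempotentElem, hrr',
    Unitization.inr_injective (R := ℂ) ?_⟩
  rw [Unitization.inr_mul, hr', ← mul_assoc, ← mul_assoc, hpu, mul_assoc (star u),
    ← Unitization.inr_mul, her]
  simp

theorem abs_mul_self_sub_le_norm_mul_self_sub {a : A} (ha : IsSelfAdjoint a) {t : ℝ}
    (ht : t ∈ quasispectrum ℝ a) : |t * t - t| ≤ ‖a * a - a‖ := by
  have key : cfcₙ (fun t : ℝ => t * t - t) a = a * a - a := by
    rw [cfcₙ_sub (fun t : ℝ => t * t) (fun t => t) a, cfcₙ_mul (fun t : ℝ => t) (fun t => t) a,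
      cfcₙ_id' ℝ a]
  have := norm_apply_le_norm_cfcₙ (fun t : ℝ => t * t - t) a ht
  rwa [key] at this

theorem exists_isStarProjection_norm_sub_le {a : A} (ha : IsSelfAdjoint a)
    (h : ‖a * a - a‖ < 3 / 16) :
    ∃ e c : A, IsStarProjection e ∧ ‖e - a‖ ≤ 2 * ‖a * a - a‖ ∧ e = a * c := by
  set f : ℝ → ℝ := fun t => min 1 (max 0 (2 * t - 1 / 2))
  set g : ℝ → ℝ := fun t => f t * (max t (1 / 4))⁻¹
  have hf : Continuous f := by fun_prop
  have hg : Continuous g :=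
    hf.mul ((continuous_id.max continuous_const).inv₀ fun t => by positivity)
  have hf_lt : ∀ t, t < 1 / 4 → f t = 0 := fun t ht => by
    simp only [f]; rw [max_eq_left (by linarith), min_eq_right zero_le_one]
  have hf_gt : ∀ t, 3 / 4 < t → f t = 1 := fun t ht => by
    simp only [f]; rw [max_eq_right (by linarith), min_eq_left (by linarith)]
  have hfg : ∀ t, t * g t = f t := fun t => by
    rcases lt_or_ge t (1 / 4) with ht | ht
    · simp [g, hf_lt t ht]
    · simp only [g, max_eq_left ht]; field_simp
  have hspec : ∀ t ∈ quasispectrum ℝ a, (t < 1 / 4 ∧ |t| ≤ 2 * ‖a * a - a‖) ∨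
      (3 / 4 < t ∧ |t - 1| ≤ 2 * ‖a * a - a‖) := fun t ht =>
    lt_quarter_or_three_quarters_lt_of_abs_mul_self_sub_le
      (abs_mul_self_sub_le_norm_mul_self_sub ha ht) h
  have hf₀ : f 0 = 0 := hf_lt 0 (by norm_num)
  have hg₀ : g 0 = 0 := by simp [g, hf₀]
  refine ⟨cfcₙ f a, cfcₙ g a, ⟨?_, cfcₙ_predicate f a⟩, ?_, ?_⟩
  · rw [IsIdempotentElem, ← cfcₙ_mul f f a hf.continuousOn hf₀ hf.continuousOn hf₀]
    refine cfcₙ_congr fun t ht => ?_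
    rcases hspec t ht with ⟨ht, -⟩ | ⟨ht, -⟩
    · simp [hf_lt t ht]
    · simp [hf_gt t ht]
  · rw [show cfcₙ f a - a = cfcₙ (fun t => f t - t) a by
      rw [cfcₙ_sub f (fun t => t) a hf.continuousOn hf₀ continuousOn_id rfl, cfcₙ_id' ℝ a]]
    refine norm_cfcₙ_le fun t ht => ?_
    rcases hspec t ht with ⟨ht, h⟩ | ⟨ht, h⟩
    · simpa [hf_lt t ht] using h
    · simpa [hf_gt t ht, abs_sub_comm] using h
  · rw [show a * cfcₙ g a = cfcₙ (fun t => t * g t) a by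
      rw [cfcₙ_mul (fun t => t) g a continuousOn_id rfl hg.continuousOn hg₀, cfcₙ_id' ℝ a]]
    exact cfcₙ_congr fun t _ => (hfg t).symm

variable [PartialOrder A]

theorem MvNSubEquiv.exists_mvNEquiv_le {p q : A} (hp : IsIdempotentElem p) (h : MvNSubEquiv p q) :
    ∃ r, IsStarProjection r ∧ MvNEquiv p r ∧ r ≤ q := by
  obtain ⟨v, hv₁, hv₂⟩ := h
  have hpr : MvNEquiv p (star v * v) := ⟨star v, by rw [star_star, hv₁], by rw [star_star]⟩
  exact ⟨_, hpr.isStarProjection hp, hpr, hv₂⟩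

theorem MvNEquiv.mvNSubEquiv_of_le {e p q : A} (h : MvNEquiv e p) (heq : e ≤ q) :
    MvNSubEquiv p q :=
  let ⟨v, hv₁, hv₂⟩ := h
  ⟨v, hv₂, hv₁ ▸ heq⟩

variable [StarOrderedRing A]

theorem IsStarProjection.mul_eq_zero_of_le_of_le_sub {e P Q r : A} (he : IsStarProjection e)
    (hP : IsStarProjection P) (hQ : IsStarProjection Q) (hr : IsStarProjection r)
    (heP : e ≤ P) (hPQ : P ≤ Q) (hrQP : r ≤ Q - P) : e * r = 0 := by
  have hQP := (hP.le_iff_sub hQ).mp hPQ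
  calc e * r = e * P * ((Q - P) * r) := by
        rw [(he.le_iff_mul_eq_left hP).mp heP, (hr.le_iff_mul_eq_right hQP).mp hrQP]
  _ = e * (P * Q - P * P) * r := by noncomm_ring
  _ = 0 := by
        rw [(hP.le_iff_mul_eq_left hQ).mp hPQ, hP.isIdempotentElem.eq, sub_self, mul_zero,
          zero_mul]

theorem exists_isStarProjection_le_of_norm_mul_mul_sub_lt {P q : A} (hP : IsStarProjection P)
    (hq : IsStarProjection q) (h : ‖P * q * P - q‖ < 1 / 16) :
    ∃ e, IsStarProjection e ∧ e ≤ P ∧ ‖e - q‖ < 1 := by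
  set a := P * q * P
  have ha : IsSelfAdjoint a := by
    simp [a, IsSelfAdjoint, hP.isSelfAdjoint.star_eq, hq.isSelfAdjoint.star_eq, mul_assoc]
  have ha₁ : ‖a‖ ≤ 1 := by
    grw [norm_mul_le, norm_mul_le]
    have := IsStarProjection.norm_le P hP
    have := IsStarProjection.norm_le q hq
    calc ‖P‖ * ‖q‖ * ‖P‖ ≤ 1 * 1 * 1 := by gcongr
    _ = 1 := by norm_num
  have haa := norm_mul_self_sub_le hq.isIdempotentElem (IsStarProjection.norm_le q hq) ha₁
  obtain ⟨e, c, he, hea, rfl⟩ := exists_isStarProjection_norm_sub_le ha (by linarith)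
  refine ⟨a * c, he, (he.le_iff_mul_eq_right hP).mpr ?_, ?_⟩
  · simp only [a, ← mul_assoc, hP.isIdempotentElem.eq]
  · calc ‖a * c - q‖ ≤ ‖a * c - a‖ + ‖a - q‖ := norm_sub_le_norm_sub_add_norm_sub _ _ _
    _ < 1 := by linarith

theorem MvNSubEquiv.of_le_left {e p q : A} (he : IsStarProjection e) (hp : IsStarProjection p)
    (hep : e ≤ p) (h : MvNSubEquiv p q) : MvNSubEquiv e q := by
  obtain ⟨v, hv₁, hv₂⟩ := h
  have hvv : IsIdempotentElem (star v * v) :=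
    isIdempotentElem_star_mul_self_iff_isIdempotentElem_self_mul_star.mpr
      (hv₁ ▸ hp.isIdempotentElem)
  refine ⟨e * v, ?_, ?_⟩
  · rw [star_mul, he.isSelfAdjoint.star_eq, mul_assoc, ← mul_assoc v, hv₁,
      (he.le_iff_mul_eq_right hp).mp hep, he.isIdempotentElem.eq]
  · calc star (e * v) * (e * v) = star v * e * v := by
          rw [star_mul, he.isSelfAdjoint.star_eq, mul_assoc, ← mul_assoc e,
            he.isIdempotentElem.eq, mul_assoc]
    _ ≤ star v * p * v := star_left_conjugate_le_conjugate hep v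
    _ = star v * v * (star v * v) := by rw [← hv₁]; noncomm_ring
    _ = star v * v := hvv.eq
    _ ≤ q := hv₂

end NonUnital

/-- Let `A` be a C*-algebra (with its canonical order) admitting an increasing
countable approximate unit `(pₙ)` of projections.  Then the following are
equivalent:
(ii) every projection `p ∈ A` is equivalent to a projection orthogonal to it;
(iii) for all `n` there is `m > n` with `pₙ ≲ pₘ - pₙ`. -/
theorem projection_orth_equiv_iff_subequiv {A : Type*} [NonUnitalCStarAlgebra A]
    [PartialOrder A] [StarOrderedRing A]
    (p : ℕ → A) (hproj : ∀ n, IsProjection (p n))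
    (hincr : ∀ n, p n ≤ p (n + 1))
    (happroxL : ∀ a : A, Filter.Tendsto (fun n => p n * a) Filter.atTop (nhds a))
    (happroxR : ∀ a : A, Filter.Tendsto (fun n => a * p n) Filter.atTop (nhds a)) :
    (∀ q : A, IsProjection q →
        ∃ q' : A, IsProjection q' ∧ MvNEquiv q q' ∧ q * q' = 0) ↔
      (∀ n : ℕ, ∃ m : ℕ, n < m ∧ MvNSubEquiv (p n) (p m - p n)) := by
  simp only [isProjection_iff_isStarProjection] at hproj ⊢
  have hmono : Monotone p := monotone_nat_of_le_succ hincr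
  have hcompress := exists_ge_norm_mul_mul_sub_lt (fun n => IsStarProjection.norm_le _ (hproj n))
    happroxL happroxR
  constructor
  · intro hii n
    obtain ⟨q, hq, hnq, hnq₀⟩ := hii (p n) (hproj n)
    have hqn₀ : q * p n = 0 := by
      simpa [hq.isSelfAdjoint.star_eq, (hproj n).isSelfAdjoint.star_eq] using congr(star $hnq₀)
    obtain ⟨m, hnm, hm⟩ := hcompress q (by norm_num : (0 : ℝ) < 1 / 16) (n + 1)
    have hPm := ((hproj n).le_iff_sub (hproj m)).mp (hmono (by omega))
    have hcorner : (p m - p n) * q * (p m - p n) = p m * q * p m := by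
      simp only [sub_mul, mul_sub, mul_assoc, hnq₀, hqn₀, mul_zero, sub_zero]
    obtain ⟨e, he, heP, heq⟩ :=
      exists_isStarProjection_le_of_norm_mul_mul_sub_lt hPm hq (hcorner ▸ hm)
    have hen : MvNEquiv e (p n) := (MvNEquiv.of_norm_sub_lt_one he hq heq).trans
      he.isIdempotentElem (hproj n).isIdempotentElem hnq.symm
    exact ⟨m, by omega, hen.mvNSubEquiv_of_le heP⟩
  · intro hiii q hq
    obtain ⟨n, -, hn⟩ := hcompress q (by norm_num : (0 : ℝ) < 1 / 16) 0
    obtain ⟨e, he, hen, heq⟩ := exists_isStarProjection_le_of_norm_mul_mul_sub_lt (hproj n) hq hn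
    obtain ⟨m, hnm, hsub⟩ := hiii n
    obtain ⟨r, hr, her, hrm⟩ :=
      (hsub.of_le_left he (hproj n) hen).exists_mvNEquiv_le he.isIdempotentElem
    have hqe : ‖q - e‖ < 1 := by rwa [norm_sub_rev]
    obtain ⟨q', hq', hrq', hqq'⟩ := exists_mvNEquiv_mul_eq_zero_of_norm_sub_lt_one hq he hr hqe
      (he.mul_eq_zero_of_le_of_le_sub (hproj n) (hproj m) hr hen (hmono hnm.le) hrm)
    have hqr := (MvNEquiv.of_norm_sub_lt_one hq he hqe).trans hq.isIdempotentElem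
      hr.isIdempotentElem her
    exact ⟨q', hq', hqr.trans hq.isIdempotentElem hq'.isIdempotentElem hrq', hqq'⟩
end

section
/- Let A be a C*-algebra, let I be a largest proper ideal of A, and let p ∈ A be a full projection. Then the hereditary subalgebra pIp is full in I; that is, every ideal J of A with J ⊆ I and pxp ∈ J for all x ∈ I satisfies J = I. (Since in a C*-algebra the closed two-sided ideals of an ideal I are exactly the closed two-sided ideals of A contained in I, this says exactly that the inclusion pIp ↪ I is a full inclusion.) -/
/-!
The elements `a` with `a I ⊆ J` form a closed ideal of `A`. It contains `p`: for `x ∈ I` we have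
`(p x)(p x)⋆ = p (x x⋆) p ∈ J`, and a closed ideal of a C*-algebra contains `c` as soon as it
contains `c c⋆` (approximate `c` by `c e` with `e` a function of `c⋆c` lying in the ideal).
Since `p` is full this ideal is all of `A`, so `x⋆x ∈ J` and hence `x ∈ J` for every `x ∈ I`.
-/

/-- A (closed two-sided) ideal `I` of a C*-algebra `A` is a largest proper ideal
if it is proper and every closed two-sided ideal `J` of `A` satisfies `J ⊆ I` or
`J = A`. -/
def IsLargestProperIdeal {A : Type*} [NonUnitalCStarAlgebra A]
    (I : TwoSidedIdeal A) : Prop :=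
  IsClosed (I : Set A) ∧ I ≠ ⊤ ∧
    ∀ J : TwoSidedIdeal A, IsClosed (J : Set A) → J ≤ I ∨ J = ⊤

namespace TwoSidedIdeal

variable {R : Type*} [NonUnitalRing R]

def colon (J I : TwoSidedIdeal R) : TwoSidedIdeal R :=
  mk' {a | ∀ x ∈ I, a * x ∈ J}
    (fun x _ => by simp)
    (fun ha hb x hx => by rw [add_mul]; exact J.add_mem (ha x hx) (hb x hx))
    (fun ha x hx => by rw [neg_mul]; exact J.neg_mem (ha x hx))
    (fun hb x hx => by rw [mul_assoc]; exact J.mul_mem_left _ _ (hb x hx))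
    (fun {_ y} ha x hx => by rw [mul_assoc]; exact ha _ (I.mul_mem_left y x hx))

theorem mem_colon {J I : TwoSidedIdeal R} {a : R} : a ∈ J.colon I ↔ ∀ x ∈ I, a * x ∈ J :=
  mem_mk' ..

theorem isClosed_colon [TopologicalSpace R] [ContinuousMul R] {J : TwoSidedIdeal R}
    (hJ : IsClosed (J : Set R)) (I : TwoSidedIdeal R) : IsClosed (J.colon I : Set R) := by
  have : (J.colon I : Set R) = ⋂ x ∈ I, (· * x) ⁻¹' (J : Set R) := by
    ext a
    simp [mem_colon]
  rw [this]
  exact isClosed_biInter fun x _ => hJ.preimage (continuous_mul_const x)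

end TwoSidedIdeal

theorem abs_mul_sq_div_add_sq_sq_le (t : ℝ) {s : ℝ} (hs : 0 < s) :
    |t| * (s ^ 2 / (t ^ 2 + s ^ 2)) ^ 2 ≤ s / 2 := by
  rw [div_pow, ← mul_div_assoc, div_le_iff₀ (by positivity)]
  have hamgm : 2 * |t| * s ≤ t ^ 2 + s ^ 2 := by nlinarith [sq_nonneg (|t| - s), sq_abs t]
  have hs2 : s ^ 2 ≤ t ^ 2 + s ^ 2 := by nlinarith [sq_nonneg t]
  calc |t| * (s ^ 2) ^ 2 = s / 2 * ((2 * |t| * s) * s ^ 2) := by ring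
    _ ≤ s / 2 * ((t ^ 2 + s ^ 2) * (t ^ 2 + s ^ 2)) := by gcongr
    _ = s / 2 * (t ^ 2 + s ^ 2) ^ 2 := by ring

section CStarAlgebra

variable {A : Type*} [NonUnitalCStarAlgebra A]

theorem star_mul_self_sub_mul_cfcₙ_star_mul_self (a : A) {h : ℝ → ℝ}
    (hh : ContinuousOn h (quasispectrum ℝ (star a * a))) (hh0 : h 0 = 0) :
    star (a - a * cfcₙ h (star a * a)) * (a - a * cfcₙ h (star a * a)) =
      cfcₙ (fun t => t * (1 - h t) ^ 2) (star a * a) := by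
  set b := star a * a
  set e := cfcₙ h b
  have he : IsSelfAdjoint e := cfcₙ_predicate h b
  have hid : ContinuousOn (fun t : ℝ => t) (quasispectrum ℝ b) := continuousOn_id
  have hk' : ContinuousOn (fun t => t - h t * t) (quasispectrum ℝ b) := hid.sub (hh.mul hid)
  have hk : cfcₙ (fun t => t - h t * t) b = b - e * b := by
    rw [cfcₙ_sub (fun t => t) (fun t => h t * t) b hid rfl (hh.mul hid) (by simp [hh0]),
      cfcₙ_mul h (fun t => t) b hh hh0 hid rfl, cfcₙ_id' ℝ b]
  calc star (a - a * e) * (a - a * e) = (b - e * b) - (b - e * b) * e := by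
        rw [star_sub, star_mul, he.star_eq]; simp only [b]; noncomm_ring
    _ = cfcₙ (fun t => (t - h t * t) - (t - h t * t) * h t) b := by
        rw [cfcₙ_sub (fun t => t - h t * t) (fun t => (t - h t * t) * h t) b hk' (by simp [hh0])
            (hk'.mul hh) (by simp [hh0]),
          cfcₙ_mul (fun t => t - h t * t) h b hk' (by simp [hh0]) hh hh0, hk]
    _ = cfcₙ (fun t => t * (1 - h t) ^ 2) b := by congr 1; funext t; ring

namespace TwoSidedIdeal

theorem cfcₙ_id_mul_mem (J : TwoSidedIdeal A) {b : A} (hb : b ∈ J) (hb_sa : IsSelfAdjoint b)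
    {g : ℝ → ℝ} (hg : ContinuousOn g (quasispectrum ℝ b)) (hg0 : g 0 = 0) :
    cfcₙ (fun t => t * g t) b ∈ J := by
  rw [cfcₙ_mul (fun t => t) g b continuousOn_id rfl hg hg0, cfcₙ_id' ℝ b]
  exact J.mul_mem_right _ _ hb

variable {J : TwoSidedIdeal A} (hJ : IsClosed (J : Set A))
include hJ

theorem mem_of_star_mul_self_mem {a : A} (ha : star a * a ∈ J) : a ∈ J := by
  suffices a ∈ closure (J : Set A) by rwa [hJ.closure_eq] at this
  rw [Metric.mem_closure_iff]
  intro δ hδ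
  set s := δ ^ 2
  have hs : 0 < s := by positivity
  set g : ℝ → ℝ := fun t => t / (t ^ 2 + s ^ 2)
  have hg : Continuous g := continuous_id.div (by fun_prop) fun t => by positivity
  -- `e = b² / (b² + s²)` with `b = a⋆a` lies in `J`, and `‖a - a e‖² = ‖b (1 - e)²‖ ≤ s / 2`
  refine ⟨a * cfcₙ (fun t => t * g t) (star a * a), J.mul_mem_left _ _ <|
    J.cfcₙ_id_mul_mem ha (.star_mul_self a) hg.continuousOn (by simp [g]), ?_⟩
  have hsq : ‖a - a * cfcₙ (fun t => t * g t) (star a * a)‖ ^ 2 ≤ s / 2 := by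
    rw [sq, ← CStarRing.norm_star_mul_self, star_mul_self_sub_mul_cfcₙ_star_mul_self
      (h := fun t => t * g t) a (continuous_id.mul hg).continuousOn (by simp [g])]
    refine norm_cfcₙ_le fun t _ => ?_
    have : 1 - t * g t = s ^ 2 / (t ^ 2 + s ^ 2) := by
      have : t ^ 2 + s ^ 2 ≠ 0 := by positivity
      simp only [g]; field_simp; ring
    rw [Real.norm_eq_abs, this, abs_mul, abs_sq]
    exact abs_mul_sq_div_add_sq_sq_le t hs
  rw [dist_eq_norm]
  nlinarith [norm_nonneg (a - a * cfcₙ (fun t => t * g t) (star a * a))]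

theorem star_mem_of_mem {a : A} (ha : a ∈ J) : star a ∈ J :=
  mem_of_star_mul_self_mem hJ <| by rw [star_star]; exact J.mul_mem_right _ _ ha

theorem mem_of_mul_star_self_mem {a : A} (ha : a * star a ∈ J) : a ∈ J := by
  rw [← star_star a]
  exact star_mem_of_mem hJ <| mem_of_star_mul_self_mem hJ <| by rwa [star_star]

end TwoSidedIdeal

end CStarAlgebra

theorem corner_full_in_largestProperIdeal_general {A : Type*} [NonUnitalCStarAlgebra A]
    (I : TwoSidedIdeal A)
    (p : A) (hp : star p = p ∧ p * p = p)
    (hpfull : ∀ J : TwoSidedIdeal A, IsClosed (J : Set A) → p ∈ J → J = ⊤) :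
    ∀ J : TwoSidedIdeal A, IsClosed (J : Set A) → J ≤ I →
      (∀ x ∈ I, p * x * p ∈ J) → J = I := by
  intro J hJ hJI hpJ
  have hp_mem : p ∈ J.colon I := TwoSidedIdeal.mem_colon.2 fun x hx =>
    J.mem_of_mul_star_self_mem hJ <| by
      simpa [star_mul, hp.1, mul_assoc] using hpJ _ (I.mul_mem_right x (star x) hx)
  have hcolon : J.colon I = ⊤ := hpfull _ (TwoSidedIdeal.isClosed_colon hJ I) hp_mem
  refine le_antisymm hJI fun x hx => J.mem_of_star_mul_self_mem hJ ?_
  exact TwoSidedIdeal.mem_colon.1 (hcolon ▸ trivial : star x ∈ J.colon I) x hx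

/-- Let `I` be a largest proper ideal of a C*-algebra `A` and let `p` be a full
projection.  Then `pIp` is full in `I`: every closed two-sided ideal `J` of `A`
with `J ⊆ I` and containing `p x p` for all `x ∈ I` equals `I`.  (Since the
closed two-sided ideals of the ideal `I` are exactly the closed two-sided
ideals of `A` contained in `I`, this says that the inclusion `pIp ↪ I` is a
full inclusion.) -/
theorem corner_full_in_largestProperIdeal {A : Type*} [NonUnitalCStarAlgebra A]
    (I : TwoSidedIdeal A) (hI : IsLargestProperIdeal I)
    (p : A) (hp : star p = p ∧ p * p = p)
    (hpfull : ∀ J : TwoSidedIdeal A, IsClosed (J : Set A) → p ∈ J → J = ⊤) :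
    ∀ J : TwoSidedIdeal A, IsClosed (J : Set A) → J ≤ I →
      (∀ x ∈ I, p * x * p ∈ J) → J = I :=
  corner_full_in_largestProperIdeal_general I p hp hpfull
end

section
/- Let E be a directed graph whose saturated hereditary subsets of vertices are exactly the three distinct sets ∅, H, and E⁰ (so H is nonempty and proper). Then every nonempty hereditary subset X ⊆ E⁰ satisfies X ∩ H ≠ ∅. -/
/-- In a directed graph with edge set `E`, vertex set `V`, and source and range
maps `s r : E → V`, the vertex `v` reaches the vertex `w` (written `v ≥ w`) if
there is a directed path (possibly of length zero) from `v` to `w`. -/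
def Reaches {V E : Type*} (s r : E → V) : V → V → Prop :=
  Relation.ReflTransGen (fun v w => ∃ e : E, s e = v ∧ r e = w)

/-- A set `H` of vertices is hereditary if `v ∈ H` and `v ≥ w` imply `w ∈ H`. -/
def Hereditary {V E : Type*} (s r : E → V) (H : Set V) : Prop :=
  ∀ ⦃v w : V⦄, v ∈ H → Reaches s r v w → w ∈ H

/-- A vertex `v` is regular if `0 < |s⁻¹(v)| < ∞`. -/
def RegularVertex {V E : Type*} (s : E → V) (v : V) : Prop :=
  {e : E | s e = v}.Nonempty ∧ {e : E | s e = v}.Finite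

/-- A set `H` of vertices is saturated if every regular vertex all of whose
outgoing edges end in `H` belongs to `H`. -/
def Saturated {V E : Type*} (s r : E → V) (H : Set V) : Prop :=
  ∀ v : V, RegularVertex s v → (∀ e : E, s e = v → r e ∈ H) → v ∈ H

/-- The saturated closure of a set of vertices. -/
inductive SatClosure {V E : Type*} (s r : E → V) (X : Set V) : V → Prop
  | base {v : V} : v ∈ X → SatClosure s r X v
  | step {v : V} : RegularVertex s v → (∀ e : E, s e = v → SatClosure s r X (r e)) →
      SatClosure s r X v

theorem satClosure_hereditary {V E : Type*} (s r : E → V) (X : Set V)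
    (hX : Hereditary s r X) : Hereditary s r {v | SatClosure s r X v} := by
  intro v w hv hvw
  induction hv generalizing w with
  | base h => exact SatClosure.base (hX h hvw)
  | step hreg hall ih =>
    rcases Relation.ReflTransGen.cases_head hvw with rfl | ⟨u, ⟨e, he, hre⟩, huw⟩
    · exact SatClosure.step hreg hall
    · exact ih e he (hre ▸ huw)

/-- If the saturated hereditary subsets of vertices of a graph are exactly the
three distinct sets `∅`, `H`, and `E⁰`, then every nonempty hereditary subset
`X` meets `H`. -/
theorem hereditary_meets_of_three_sat_hered {V E : Type*} (s r : E → V)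
    (H : Set V) (hH : Hereditary s r H ∧ Saturated s r H)
    (hne : H.Nonempty) (hproper : H ≠ Set.univ)
    (honly : ∀ K : Set V, Hereditary s r K → Saturated s r K →
      K = ∅ ∨ K = H ∨ K = Set.univ)
    (X : Set V) (hX : Hereditary s r X) (hXne : X.Nonempty) :
    (X ∩ H).Nonempty := by
  by_contra hcon
  have hdisj : ∀ v, v ∈ X → v ∉ H := fun v hv hvH =>
    hcon ⟨v, hv, hvH⟩
  set K : Set V := {v | SatClosure s r X v} with hK
  have hKher : Hereditary s r K := satClosure_hereditary s r X hX
  have hKsat : Saturated s r K := fun v hreg hall => SatClosure.step hreg hall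
  have hKdisj : ∀ v, v ∈ K → v ∉ H := by
    intro v hv
    induction hv with
    | base h => exact hdisj _ h
    | step hreg hall ih =>
      intro hvH
      obtain ⟨e, he⟩ := hreg.1
      exact ih e he (hH.1 hvH (Relation.ReflTransGen.single ⟨e, he, rfl⟩))
  obtain ⟨x, hx⟩ := hXne
  have hxK : x ∈ K := SatClosure.base hx
  obtain ⟨h0, hh0⟩ := hne
  rcases honly K hKher hKsat with h | h | h
  · exact (h ▸ hxK : x ∈ (∅ : Set V))
  · exact hKdisj x hxK (h ▸ hxK)
  · exact hKdisj h0 (h ▸ Set.mem_univ h0) hh0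
end

section
/- Let E be a directed graph whose saturated hereditary subsets of vertices are exactly the three distinct sets ∅, H, and E⁰ (so H is nonempty and proper). Then E has at most one sink, and every sink of E belongs to H. -/
/-- The saturated hereditary closure of a sink `v`. -/
inductive SatCl {V E : Type*} (s r : E → V) (v : V) : V → Prop
  | base : SatCl s r v v
  | sat (u : V) : RegularVertex s u → (∀ e : E, s e = u → SatCl s r v (r e)) →
      SatCl s r v u

lemma reaches_sink_eq {V E : Type*} (s r : E → V) {v u : V}
    (hv : ∀ e : E, s e ≠ v) (h : Reaches s r v u) : u = v := by
  rcases Relation.ReflTransGen.cases_head h with h' | ⟨c, ⟨e, he, _⟩, _⟩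
  · exact h'.symm
  · exact absurd he (hv e)

lemma satCl_hereditary {V E : Type*} (s r : E → V) {v : V}
    (hv : ∀ e : E, s e ≠ v) : Hereditary s r {w | SatCl s r v w} := by
  intro w u hw hr
  induction hw generalizing u with
  | base => exact (reaches_sink_eq s r hv hr) ▸ SatCl.base
  | sat u₀ hreg hedges ih =>
    rcases Relation.ReflTransGen.cases_head hr with h' | ⟨c, ⟨e, he, hre⟩, hcu⟩
    · exact h' ▸ SatCl.sat u₀ hreg hedges
    · exact ih e he (hre ▸ hcu)

lemma satCl_saturated {V E : Type*} (s r : E → V) (v : V) :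
    Saturated s r {w | SatCl s r v w} :=
  fun u hreg h => SatCl.sat u hreg h

lemma satCl_reaches {V E : Type*} (s r : E → V) {v w : V}
    (hw : SatCl s r v w) : Reaches s r w v := by
  induction hw with
  | base => exact Relation.ReflTransGen.refl
  | sat u₀ hreg hedges ih =>
    obtain ⟨e, he⟩ := hreg.1
    exact Relation.ReflTransGen.head ⟨e, he, rfl⟩ (ih e he)

/-- If the saturated hereditary subsets of vertices of a graph are exactly the
three distinct sets `∅`, `H`, and `E⁰`, then the graph has at most one sink,
and every sink belongs to `H`.  (A sink is a vertex emitting no edges.) -/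
theorem sink_unique_and_mem_of_three_sat_hered {V E : Type*} (s r : E → V)
    (H : Set V) (hH : Hereditary s r H ∧ Saturated s r H)
    (hne : H.Nonempty) (hproper : H ≠ Set.univ)
    (honly : ∀ K : Set V, Hereditary s r K → Saturated s r K →
      K = ∅ ∨ K = H ∨ K = Set.univ) :
    (∀ v w : V, (∀ e : E, s e ≠ v) → (∀ e : E, s e ≠ w) → v = w) ∧
      (∀ v : V, (∀ e : E, s e ≠ v) → v ∈ H) := by
  -- For a sink `v`, `SatCl s r v` is saturated and hereditary, so it is
  -- `∅`, `H`, or `univ`; it contains `v`, so it is `H` or `univ`.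
  have key : ∀ v : V, (∀ e : E, s e ≠ v) →
      {w | SatCl s r v w} = H ∨ {w | SatCl s r v w} = Set.univ := by
    intro v hv
    rcases honly _ (satCl_hereditary s r hv) (satCl_saturated s r v) with h | h | h
    · exact absurd (h ▸ SatCl.base : v ∈ (∅ : Set V)) (Set.notMem_empty v)
    · exact Or.inl h
    · exact Or.inr h
  have mem : ∀ v : V, (∀ e : E, s e ≠ v) → v ∈ H := by
    intro v hv
    rcases key v hv with h | h
    · exact h ▸ (SatCl.base : v ∈ {w | SatCl s r v w})
    · obtain ⟨x, hx⟩ := hne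
      have hxcl : SatCl s r v x := by
        have : x ∈ {w | SatCl s r v w} := h ▸ Set.mem_univ x
        exact this
      exact hH.1 hx (satCl_reaches s r hxcl)
  refine ⟨fun v w hv hw => ?_, mem⟩
  have hwcl : SatCl s r v w := by
    rcases key v hv with h | h
    · have : w ∈ {x | SatCl s r v x} := h ▸ mem w hw
      exact this
    · have : w ∈ {x | SatCl s r v x} := h ▸ Set.mem_univ w
      exact this
  exact reaches_sink_eq s r hw (satCl_reaches s r hwcl)
end

section
/- Let E be a directed graph and let H ⊆ E⁰ be a saturated hereditary subset such that every saturated hereditary subset K of E⁰ satisfies K ⊆ H or K = E⁰. If α is a cycle in E all of whose vertices lie in E⁰ ∖ H, then for every vertex x ∈ E⁰ one has x ≥ s(α) if and only if x ∉ H, where s(α) is the base point of α. -/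
/-! The vertices that do not reach the base point form a hereditary set, and a saturated one
because the cycle returns to the base point. By maximality this set lies in `H` (it cannot be
everything, as the base point reaches itself), so every vertex outside `H` reaches the base
point; conversely a vertex reaching the base point is outside `H` since `H` is hereditary. -/

section

variable {V E : Type*} {s r : E → V}

theorem hereditary_setOf_not_reaches (w : V) :
    Hereditary s r {x | ¬ Reaches s r x w} :=
  fun _ _ hv hvw hw => hv (hvw.trans hw)

theorem saturated_setOf_not_reaches {w : V} {e : E} (he : s e = w) (hew : Reaches s r (r e) w) :
    Saturated s r {x | ¬ Reaches s r x w} := by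
  intro v _ hout hvw
  rcases hvw.cases_head with rfl | ⟨u, ⟨f, hf, rfl⟩, hfw⟩
  · exact hout e he hew
  · exact hout f hf hfw

open Fin.CommRing in
theorem reaches_of_cycle {n : ℕ} {α : Fin (n + 1) → E}
    (hchain : ∀ i, r (α i) = s (α (i + 1))) (i j : Fin (n + 1)) :
    Reaches s r (s (α i)) (s (α j)) := by
  have hstep : ∀ k : ℕ, Reaches s r (s (α i)) (s (α (i + k))) := by
    intro k
    induction k with
    | zero => rw [Nat.cast_zero, add_zero]; exact .refl
    | succ k ih =>
      rw [Nat.cast_succ, ← add_assoc, ← hchain]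
      exact ih.tail ⟨_, rfl, rfl⟩
  simpa using hstep (j - i).val

end

/-- Let `H` be a saturated hereditary set of vertices such that every saturated
hereditary set `K` satisfies `K ⊆ H` or `K = E⁰`.  If `α` is a cycle (given by
edges `α i`, `i : Fin (n+1)`, with `r (α i) = s (α (i+1))` cyclically) all of
whose vertices lie outside `H`, then a vertex `x` reaches the base point
`s (α 0)` if and only if `x ∉ H`. -/
theorem reaches_cycle_iff_not_mem {V E : Type*} (s r : E → V) (H : Set V)
    (hH : Hereditary s r H ∧ Saturated s r H)
    (hmax : ∀ K : Set V, Hereditary s r K → Saturated s r K →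
      K ⊆ H ∨ K = Set.univ)
    (n : ℕ) (α : Fin (n + 1) → E)
    (hchain : ∀ i : Fin (n + 1), r (α i) = s (α (i + 1)))
    (hout : ∀ i : Fin (n + 1), s (α i) ∉ H) :
    ∀ x : V, Reaches s r x (s (α 0)) ↔ x ∉ H := by
  have hsat : Saturated s r {x | ¬ Reaches s r x (s (α 0))} :=
    saturated_setOf_not_reaches rfl (hchain 0 ▸ reaches_of_cycle hchain (0 + 1) 0)
  rcases hmax _ (hereditary_setOf_not_reaches _) hsat with hsub | huniv
  · intro x
    exact ⟨fun hx hxH => hout 0 (hH.1 hxH hx), fun hxH => not_not.mp fun hx => hxH (hsub hx)⟩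
  · have hbase : s (α 0) ∈ {x | ¬ Reaches s r x (s (α 0))} := huniv ▸ Set.mem_univ _
    exact absurd .refl hbase
end

section
/- Let a ≥ 2 and b, b' ≥ 1 be integers. Let N (respectively N') be the subgroup of ℤ × ℤ generated by (b, a−1) (respectively (b', a−1)), let G = (ℤ×ℤ)/N and G' = (ℤ×ℤ)/N', let ι : ℤ → G and ι' : ℤ → G' be the homomorphisms x ↦ [(x, 0)], and let π : G → ℤ/(a−1)ℤ and π' : G' → ℤ/(a−1)ℤ be the homomorphisms induced by (x, y) ↦ y mod (a−1) (well defined since a−1 ≡ 0 mod (a−1)). Then there exist group isomorphisms α : ℤ → ℤ, β : G → G', and γ : ℤ/(a−1)ℤ → ℤ/(a−1)ℤ with β ∘ ι = ι' ∘ α and π' ∘ β = γ ∘ π if and only if there exists a unit z of the ring ℤ/(a−1)ℤ such that b ≡ z·b' in ℤ/(a−1)ℤ. -/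
/-!
If `β [(0, 1)] = [(x, y)]`, applying `β` to the relation `[(b, 0)] + n • [(0, 1)] = 0` (with
`n = a - 1`) gives `(α b, 0) + n • (x, y) ∈ ⟨(b', n)⟩`, hence `α(1) b ≡ y b' (mod n)`; here
`α 1 = ±1`, and `y ≡ γ 1` is a unit since `γ` is an additive automorphism of `ZMod n`.

Conversely, lift `z` and `z⁻¹` to integers `u` and `u'`. The shears `(x, y) ↦ (x + t y, u y)` and
`(x, y) ↦ (x + t' y, u' y)`, with `t, t'` chosen so that `(b, n) ↦ u • (b', n)` and
`(b', n) ↦ u' • (b, n)`, descend to mutually inverse isomorphisms of the quotients: their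
composites are shears `(x, y) ↦ (x + s y, w y)` with `(s, w - 1) ∈ ⟨(b, n)⟩`.
-/

open AddSubgroup QuotientAddGroup

theorem AddEquiv.isUnit_apply_one {R : Type*} [CommRing R]
    (hR : Function.Surjective (Int.cast : ℤ → R)) (e : R ≃+ R) : IsUnit (e 1) := by
  obtain ⟨x, hx⟩ := e.surjective 1
  obtain ⟨k, rfl⟩ := hR x
  have hk : e (k • 1) = k • e 1 := map_zsmul e k 1
  rw [zsmul_one, zsmul_eq_mul] at hk
  exact IsUnit.of_mul_eq_one (k : R) (by rw [mul_comm, ← hk, hx])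

abbrev IntExt (b : ℤ) (n : ℕ) := (ℤ × ℤ) ⧸ zmultiples ((b, n) : ℤ × ℤ)

namespace IntExt

variable (b : ℤ) (n : ℕ)

def inl : ℤ →+ IntExt b n := (mk' _).comp (AddMonoidHom.inl ℤ ℤ)

def proj : IntExt b n →+ ZMod n :=
  lift _ ((Int.castAddHom (ZMod n)).comp (AddMonoidHom.snd ℤ ℤ)) <|
    zmultiples_le.2 <| by simp

@[simp] lemma inl_apply (x : ℤ) : inl b n x = mk (x, 0) := rfl

@[simp] lemma proj_mk (p : ℤ × ℤ) : proj b n (mk p) = p.2 := rfl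

variable {b n} {b' : ℤ}

lemma intCast_eq_mul_of_mk_eq_zero (hn : n ≠ 0) {c x y : ℤ}
    (h : (mk (c + n * x, n * y) : IntExt b n) = 0) : (c : ZMod n) = y * b := by
  obtain ⟨k, hk⟩ := mem_zmultiples_iff.1 ((eq_zero_iff _).1 h)
  simp only [Prod.smul_mk, smul_eq_mul, Prod.mk.injEq] at hk
  obtain rfl : k = y := mul_right_cancel₀ (by exact_mod_cast hn) (hk.2.trans (mul_comm _ _))
  simpa using congrArg (Int.cast : ℤ → ZMod n) hk.1.symm

theorem exists_isUnit_of_addEquiv (hn : n ≠ 0) (α : ℤ ≃+ ℤ) (β : IntExt b n ≃+ IntExt b' n)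
    (γ : ZMod n ≃+ ZMod n) (hι : ∀ x, β (inl b n x) = inl b' n (α x))
    (hπ : ∀ g, proj b' n (β g) = γ (proj b n g)) :
    ∃ z : ZMod n, IsUnit z ∧ (b : ZMod n) = z * b' := by
  obtain ⟨⟨x, y⟩, hxy⟩ := mk_surjective (β (mk (0, 1)))
  have hy : (y : ZMod n) = γ 1 := by simpa [← hxy] using hπ (mk (0, 1))
  have hrel : (mk (α b + n * x, n * y) : IntExt b' n) = 0 := by
    have hbn : (mk (b, n) : IntExt b n) = 0 := (eq_zero_iff _).2 (mem_zmultiples _)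
    calc (mk (α b + n * x, n * y) : IntExt b' n)
        = inl b' n (α b) + (n : ℤ) • mk (x, y) := by
          rw [inl_apply, ← mk_zsmul, ← mk_add]; congr 1; ext <;> simp
      _ = β (inl b n b + (n : ℤ) • mk (0, 1)) := by rw [map_add, map_zsmul, hι, hxy]
      _ = β (mk (b, n)) := by
          rw [inl_apply, ← mk_zsmul, ← mk_add]; congr 2; ext <;> simp
      _ = 0 := by rw [hbn, map_zero]
  have hαb : α b = b * α 1 := by rw [← smul_eq_mul, ← map_zsmul, smul_eq_mul, mul_one]
  have hα : IsUnit ((α 1 : ℤ) : ZMod n) :=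
    (α.isUnit_apply_one fun x => ⟨x, Int.cast_id⟩).map (Int.castRingHom _)
  have key := intCast_eq_mul_of_mk_eq_zero hn hrel
  rw [hαb, Int.cast_mul, hy] at key
  refine ⟨hα.unit⁻¹ * γ 1, hα.unit⁻¹.isUnit.mul (γ.isUnit_apply_one ZMod.intCast_surjective), ?_⟩
  rw [mul_assoc, ← key, mul_comm, mul_assoc, IsUnit.mul_val_inv, mul_one]

def shear (t u : ℤ) : ℤ × ℤ →+ ℤ × ℤ :=
  AddMonoidHom.mk' (fun p => (p.1 + t * p.2, u * p.2)) fun p q => by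
    ext <;> simp only [Prod.fst_add, Prod.snd_add] <;> ring

def shearMap (t u : ℤ) (h : u * b' = b + t * n) : IntExt b n →+ IntExt b' n :=
  map _ _ (shear t u) <| zmultiples_le.2 <| mem_zmultiples_iff.2
    ⟨u, by simp [shear, h]⟩

@[simp] lemma shearMap_mk {t u : ℤ} (h : u * b' = b + t * n) (p : ℤ × ℤ) :
    shearMap t u h (mk p) = mk (p.1 + t * p.2, u * p.2) := rfl

lemma mk_shear_eq_mk (hn : n ≠ 0) {s w : ℤ} (hw : (n : ℤ) ∣ w - 1) (hs : n * s = (w - 1) * b)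
    (x y : ℤ) : (mk (x + s * y, w * y) : IntExt b n) = mk (x, y) := by
  obtain ⟨m, hm⟩ := hw
  have hsm : s = m * b := mul_left_cancel₀ (Int.natCast_ne_zero.2 hn) (by rw [hs, hm]; ring)
  rw [QuotientAddGroup.eq, mem_zmultiples_iff]
  refine ⟨-(m * y), Prod.ext ?_ ?_⟩
  · simp only [Prod.smul_fst, Prod.fst_add, Prod.fst_neg, smul_eq_mul]
    linear_combination y * hsm
  · simp only [Prod.smul_snd, Prod.snd_add, Prod.snd_neg, smul_eq_mul]
    linear_combination y * hm

lemma shearMap_comp_shearMap (hn : n ≠ 0) {t t' u u' : ℤ} (h : u * b' = b + t * n)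
    (h' : u' * b = b' + t' * n) (hu : (n : ℤ) ∣ u * u' - 1) :
    (shearMap t' u' h').comp (shearMap t u h) = AddMonoidHom.id _ := by
  refine AddMonoidHom.ext fun g => induction_on g fun ⟨x, y⟩ => ?_
  have := mk_shear_eq_mk (b := b) hn (s := t + t' * u) (w := u' * u) (by rwa [mul_comm])
    (by linear_combination -h - u * h') x y
  simpa [add_assoc, add_mul, mul_assoc] using this

def shearEquiv (hn : n ≠ 0) {t t' u u' : ℤ} (h : u * b' = b + t * n)
    (h' : u' * b = b' + t' * n) (hu : (n : ℤ) ∣ u * u' - 1) : IntExt b n ≃+ IntExt b' n :=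
  (shearMap t u h).toAddEquiv (shearMap t' u' h') (shearMap_comp_shearMap hn h h' hu)
    (shearMap_comp_shearMap hn h' h (by rwa [mul_comm]))

theorem exists_addEquiv_of_isUnit (hn : n ≠ 0) {z : ZMod n} (hz : IsUnit z)
    (hb : (b : ZMod n) = z * b') :
    ∃ (α : ℤ ≃+ ℤ) (β : IntExt b n ≃+ IntExt b' n) (γ : ZMod n ≃+ ZMod n),
      (∀ x, β (inl b n x) = inl b' n (α x)) ∧ ∀ g, proj b' n (β g) = γ (proj b n g) := by
  obtain ⟨u, hu⟩ := ZMod.intCast_surjective z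
  obtain ⟨u', hu'⟩ := ZMod.intCast_surjective (hz.unit⁻¹ : (ZMod n)ˣ).val
  obtain ⟨t, ht⟩ : (n : ℤ) ∣ u * b' - b := (ZMod.intCast_zmod_eq_zero_iff_dvd _ _).1 <| by
    push_cast; rw [hu, hb, sub_self]
  obtain ⟨t', ht'⟩ : (n : ℤ) ∣ u' * b - b' := (ZMod.intCast_zmod_eq_zero_iff_dvd _ _).1 <| by
    push_cast; rw [hu', hb, ← mul_assoc, IsUnit.val_inv_mul, one_mul, sub_self]
  have huu' : (n : ℤ) ∣ u * u' - 1 := (ZMod.intCast_zmod_eq_zero_iff_dvd _ _).1 <| by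
    push_cast; rw [hu, hu', IsUnit.mul_val_inv, sub_self]
  refine ⟨AddEquiv.refl ℤ,
    shearEquiv hn (t := t) (t' := t') (u := u) (u' := u')
      (by linear_combination ht) (by linear_combination ht') huu',
    DistribMulAction.toAddEquiv (ZMod n) hz.unit, fun x => ?_, fun g => induction_on g fun p => ?_⟩
  · simp [shearEquiv]
  · simp [shearEquiv, hu]

theorem exists_addEquiv_iff_exists_isUnit (hn : n ≠ 0) :
    (∃ (α : ℤ ≃+ ℤ) (β : IntExt b n ≃+ IntExt b' n) (γ : ZMod n ≃+ ZMod n),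
      (∀ x, β (inl b n x) = inl b' n (α x)) ∧ ∀ g, proj b' n (β g) = γ (proj b n g)) ↔
    ∃ z : ZMod n, IsUnit z ∧ (b : ZMod n) = z * b' :=
  ⟨fun ⟨α, β, γ, hι, hπ⟩ => exists_isUnit_of_addEquiv hn α β γ hι hπ,
    fun ⟨_, hz, hb⟩ => exists_addEquiv_of_isUnit hn hz hb⟩

end IntExt

theorem extension_iso_iff_unit_mul_general (a b b' : ℤ)
    (ha : 2 ≤ a)
    (N N' : AddSubgroup (ℤ × ℤ))
    (hN : N = AddSubgroup.closure {(b, a - 1)})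
    (hN' : N' = AddSubgroup.closure {(b', a - 1)})
    (ι : ℤ →+ (ℤ × ℤ) ⧸ N)
    (hι : ∀ x : ℤ, ι x = QuotientAddGroup.mk (x, (0 : ℤ)))
    (ι' : ℤ →+ (ℤ × ℤ) ⧸ N')
    (hι' : ∀ x : ℤ, ι' x = QuotientAddGroup.mk (x, (0 : ℤ)))
    (π : (ℤ × ℤ) ⧸ N →+ ZMod (a - 1).toNat)
    (hπ : ∀ x y : ℤ, π (QuotientAddGroup.mk (x, y)) = (y : ZMod (a - 1).toNat))
    (π' : (ℤ × ℤ) ⧸ N' →+ ZMod (a - 1).toNat)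
    (hπ' : ∀ x y : ℤ, π' (QuotientAddGroup.mk (x, y)) = (y : ZMod (a - 1).toNat)) :
    (∃ (α : ℤ ≃+ ℤ) (β : ((ℤ × ℤ) ⧸ N) ≃+ ((ℤ × ℤ) ⧸ N'))
        (γ : ZMod (a - 1).toNat ≃+ ZMod (a - 1).toNat),
      (∀ x : ℤ, β (ι x) = ι' (α x)) ∧
      (∀ g : (ℤ × ℤ) ⧸ N, π' (β g) = γ (π g))) ↔
    (∃ z : ZMod (a - 1).toNat, IsUnit z ∧
      (b : ZMod (a - 1).toNat) = z * (b' : ZMod (a - 1).toNat)) := by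
  have hn : ((a - 1).toNat : ℤ) = a - 1 := Int.toNat_of_nonneg (by omega)
  obtain rfl : N = zmultiples (b, ((a - 1).toNat : ℤ)) := by rw [hN, hn, zmultiples_eq_closure]
  obtain rfl : N' = zmultiples (b', ((a - 1).toNat : ℤ)) := by rw [hN', hn, zmultiples_eq_closure]
  obtain rfl : ι = IntExt.inl b _ := AddMonoidHom.ext hι
  obtain rfl : ι' = IntExt.inl b' _ := AddMonoidHom.ext hι'
  obtain rfl : π = IntExt.proj b _ := addMonoidHom_ext _ <| AddMonoidHom.ext fun p => hπ p.1 p.2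
  obtain rfl : π' = IntExt.proj b' _ := addMonoidHom_ext _ <| AddMonoidHom.ext fun p => hπ' p.1 p.2
  exact IntExt.exists_addEquiv_iff_exists_isUnit (by omega)

/-- Let `a ≥ 2` and `b, b' ≥ 1` be integers, let `N` (resp. `N'`) be the
subgroup of `ℤ × ℤ` generated by `(b, a-1)` (resp. `(b', a-1)`), let
`G = (ℤ × ℤ)/N` and `G' = (ℤ × ℤ)/N'`, let `ι, ι'` be the maps `x ↦ [(x, 0)]`,
and let `π, π'` be the maps induced by `(x, y) ↦ y mod (a-1)`.  Then there are
group isomorphisms `α : ℤ → ℤ`, `β : G → G'`, `γ : ℤ/(a-1) → ℤ/(a-1)` with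
`β ∘ ι = ι' ∘ α` and `π' ∘ β = γ ∘ π` if and only if there is a unit `z` of
`ℤ/(a-1)` with `b = z * b'` in `ℤ/(a-1)`. -/
theorem extension_iso_iff_unit_mul (a b b' : ℤ)
    (ha : 2 ≤ a) (hb : 1 ≤ b) (hb' : 1 ≤ b')
    (N N' : AddSubgroup (ℤ × ℤ))
    (hN : N = AddSubgroup.closure {(b, a - 1)})
    (hN' : N' = AddSubgroup.closure {(b', a - 1)})
    (ι : ℤ →+ (ℤ × ℤ) ⧸ N)
    (hι : ∀ x : ℤ, ι x = QuotientAddGroup.mk (x, (0 : ℤ)))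
    (ι' : ℤ →+ (ℤ × ℤ) ⧸ N')
    (hι' : ∀ x : ℤ, ι' x = QuotientAddGroup.mk (x, (0 : ℤ)))
    (π : (ℤ × ℤ) ⧸ N →+ ZMod (a - 1).toNat)
    (hπ : ∀ x y : ℤ, π (QuotientAddGroup.mk (x, y)) = (y : ZMod (a - 1).toNat))
    (π' : (ℤ × ℤ) ⧸ N' →+ ZMod (a - 1).toNat)
    (hπ' : ∀ x y : ℤ, π' (QuotientAddGroup.mk (x, y)) = (y : ZMod (a - 1).toNat)) :
    (∃ (α : ℤ ≃+ ℤ) (β : ((ℤ × ℤ) ⧸ N) ≃+ ((ℤ × ℤ) ⧸ N'))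
        (γ : ZMod (a - 1).toNat ≃+ ZMod (a - 1).toNat),
      (∀ x : ℤ, β (ι x) = ι' (α x)) ∧
      (∀ g : (ℤ × ℤ) ⧸ N, π' (β g) = γ (π g))) ↔
    (∃ z : ZMod (a - 1).toNat, IsUnit z ∧
      (b : ZMod (a - 1).toNat) = z * (b' : ZMod (a - 1).toNat)) :=
  extension_iso_iff_unit_mul_general a b b' ha N N' hN hN' ι hι ι' hι' π hπ π' hπ'
end

section
/- Let a, d ≥ 2 and b, b' ≥ 1 be integers. Let N (respectively N') be the subgroup of ℤ × ℤ generated by (d−1, 0) and (b, a−1) (respectively (d−1, 0) and (b', a−1)), let G = (ℤ×ℤ)/N and G' = (ℤ×ℤ)/N', let ι : ℤ/(d−1)ℤ → G and ι' : ℤ/(d−1)ℤ → G' be the homomorphisms induced by x ↦ [(x, 0)] (well defined since (d−1, 0) ∈ N and (d−1, 0) ∈ N'), and let π : G → ℤ/(a−1)ℤ and π' : G' → ℤ/(a−1)ℤ be the homomorphisms induced by (x, y) ↦ y mod (a−1). Then there exist group isomorphisms α : ℤ/(d−1)ℤ → ℤ/(d−1)ℤ, β : G → G', and γ : ℤ/(a−1)ℤ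 → ℤ/(a−1)ℤ with β ∘ ι = ι' ∘ α and π' ∘ β = γ ∘ π if and only if there exist integers z₁ and z₂ such that z₁ mod (d−1) is a unit of ℤ/(d−1)ℤ, z₂ mod (a−1) is a unit of ℤ/(a−1)ℤ, and z₁·b ≡ z₂·b' mod gcd(a−1, d−1). -/
/-! With `m = d - 1` and `n = a - 1`, both quotients are extensions
`0 → ℤ/m → (ℤ × ℤ)/N → ℤ/n → 0`, and every automorphism of `ℤ/k` is multiplication by a unit.
Given `(α, β, γ)`, acting by `z₁` and `z₂` on the ends, write `β [(0, 1)] = [(p, q)]`; then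
`q ≡ z₂ (mod n)`, and `β` carries the relation `n • [(0, 1)] = [(-b, 0)]` to
`n • [(p, q)] = [(-z₁ b, 0)]`, which forces `z₁ b ≡ q b' ≡ z₂ b' (mod gcd(n, m))`.
Conversely, choosing `c` with `z₁ b + c n ≡ z₂ b' (mod m)`, the shear
`(x, y) ↦ (z₁ x + c y, z₂ y)` maps `N` into `N'`, and the induced map is bijective by the
five lemma. -/

theorem ZMod.exists_isUnit_intCast_addAut_eq_mul {k : ℕ} (e : ZMod k ≃+ ZMod k) :
    ∃ z : ℤ, IsUnit (z : ZMod k) ∧ ∀ x, e x = z * x := by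
  set u := (ZMod.AddAutEquivUnits k e).toMul
  have he : ∀ x, e x = u * x := fun x =>
    (DFunLike.congr_fun ((ZMod.AddAutEquivUnits k).symm_apply_apply e) x).symm
  exact ⟨(u : ZMod k).cast, by rw [ZMod.intCast_zmod_cast]; exact u.isUnit,
    by rwa [ZMod.intCast_zmod_cast]⟩

theorem ZMod.intCast_toNat_eq_zero_iff {m x : ℤ} (hm : 0 ≤ m) :
    (x : ZMod m.toNat) = 0 ↔ m ∣ x := by
  rw [ZMod.intCast_zmod_eq_zero_iff_dvd, Int.toNat_of_nonneg hm]

namespace AddMonoidHom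

variable {M N : Type*} [AddCommGroup M] [AddCommGroup N] {f : M →+ N}

theorem exact_zero_of_injective (hf : Function.Injective f) :
    Function.Exact (0 : Unit →+ M) f := fun _ =>
  ⟨fun h => ⟨(), (hf (h.trans (map_zero f).symm)).symm⟩, by rintro ⟨_, rfl⟩; exact map_zero f⟩

theorem exact_zero_of_surjective (hf : Function.Surjective f) :
    Function.Exact f (0 : N →+ Unit) := fun y =>
  ⟨fun _ => hf y, fun _ => rfl⟩

theorem bijective_of_shortExact {A B C A' B' C' : Type*}
    [AddCommGroup A] [AddCommGroup B] [AddCommGroup C]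
    [AddCommGroup A'] [AddCommGroup B'] [AddCommGroup C']
    {ι : A →+ B} {π : B →+ C} {ι' : A' →+ B'} {π' : B' →+ C'}
    (hι : Function.Injective ι) (hιπ : Function.Exact ι π) (hπ : Function.Surjective π)
    (hι' : Function.Injective ι') (hιπ' : Function.Exact ι' π') (hπ' : Function.Surjective π')
    {α : A →+ A'} {β : B →+ B'} {γ : C →+ C'}
    (hα : Function.Bijective α) (hγ : Function.Bijective γ)
    (hβι : ∀ x, β (ι x) = ι' (α x)) (hπβ : ∀ g, π' (β g) = γ (π g)) :
    Function.Bijective β :=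
  bijective_of_surjective_of_bijective_of_bijective_of_injective
    (0 : Unit →+ A) ι π 0 0 ι' π' 0 0 α β γ 0 (by ext; simp)
    (ext fun x => (hβι x).symm) (ext hπβ) (ext fun _ => rfl)
    (exact_zero_of_injective hι) hιπ (exact_zero_of_surjective hπ)
    (exact_zero_of_injective hι') hιπ' (exact_zero_of_surjective hπ')
    (fun _ => ⟨0, rfl⟩) hα hγ (fun _ _ _ => Subsingleton.elim _ _)

end AddMonoidHom

open QuotientAddGroup

def extensionSubgroup (m n b : ℤ) : AddSubgroup (ℤ × ℤ) :=
  AddSubgroup.closure {(m, 0), (b, n)}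

namespace extensionSubgroup

variable {m n b b' : ℤ}

theorem mem_iff {x y : ℤ} :
    (x, y) ∈ extensionSubgroup m n b ↔ ∃ u v : ℤ, x = u * m + v * b ∧ y = v * n := by
  simp only [extensionSubgroup, AddSubgroup.mem_closure_pair, Prod.smul_mk, smul_eq_mul,
    Prod.mk_add_mk, mul_zero, zero_add, Prod.mk.injEq, eq_comm (b := x), eq_comm (b := y)]

theorem zsmul_mk_zero_one :
    n • (mk (0, 1) : (ℤ × ℤ) ⧸ extensionSubgroup m n b) = mk (-b, 0) := by
  rw [← mk_zsmul, eq_comm, QuotientAddGroup.eq]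
  exact mem_iff.mpr ⟨0, 1, by simp, by simp⟩

theorem gcd_dvd_of_zsmul_mk_eq {p q c : ℤ} (hn : n ≠ 0)
    (h : n • (mk (p, q) : (ℤ × ℤ) ⧸ extensionSubgroup m n b) = mk (c, 0)) :
    (Int.gcd n m : ℤ) ∣ c + q * b := by
  rw [← mk_zsmul, QuotientAddGroup.eq] at h
  obtain ⟨u, v, hx, hy⟩ := mem_iff.mp h
  simp only [Prod.fst_neg, Prod.snd_neg, Prod.smul_fst, Prod.smul_snd, smul_eq_mul,
    add_zero] at hx hy
  obtain rfl : v = -q := mul_right_cancel₀ hn (by linarith)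
  rw [show c + q * b = u * m + p * n by linarith]
  exact dvd_add (dvd_mul_of_dvd_right (Int.gcd_dvd_right n m) u)
    (dvd_mul_of_dvd_right (Int.gcd_dvd_left n m) p)

def shear (z₁ c z₂ : ℤ) : ℤ × ℤ →+ ℤ × ℤ :=
  AddMonoidHom.mk' (fun v => (z₁ * v.1 + c * v.2, z₂ * v.2)) fun v w => by
    ext <;> simp only [Prod.fst_add, Prod.snd_add] <;> ring

theorem le_comap_shear {z₁ c z₂ : ℤ} (h : m ∣ z₁ * b + c * n - z₂ * b') :
    extensionSubgroup m n b ≤ (extensionSubgroup m n b').comap (shear z₁ c z₂) := by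
  obtain ⟨e, he⟩ := h
  rw [extensionSubgroup, AddSubgroup.closure_le, Set.insert_subset_iff, Set.singleton_subset_iff]
  exact ⟨mem_iff.mpr ⟨z₁, 0, by ring, by ring⟩,
    mem_iff.mpr ⟨e, z₂, by linear_combination he, by ring⟩⟩

variable {ι : ZMod m.toNat →+ (ℤ × ℤ) ⧸ extensionSubgroup m n b}
  {ι' : ZMod m.toNat →+ (ℤ × ℤ) ⧸ extensionSubgroup m n b'}
  {π : (ℤ × ℤ) ⧸ extensionSubgroup m n b →+ ZMod n.toNat}
  {π' : (ℤ × ℤ) ⧸ extensionSubgroup m n b' →+ ZMod n.toNat}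

theorem injective_of_apply_intCast (hm : 0 ≤ m) (hn : n ≠ 0)
    (hι : ∀ x : ℤ, ι x = mk (x, 0)) : Function.Injective ι := by
  rw [injective_iff_map_eq_zero]
  intro x hx
  obtain ⟨x, rfl⟩ := ZMod.intCast_surjective x
  rw [hι, QuotientAddGroup.eq_zero_iff, mem_iff] at hx
  obtain ⟨u, v, hx, hv⟩ := hx
  obtain rfl : v = 0 := by simpa [hn] using hv.symm
  rw [ZMod.intCast_toNat_eq_zero_iff hm, hx]
  simp

theorem exact_of_apply_intCast (hn : 0 ≤ n) (hι : ∀ x : ℤ, ι x = mk (x, 0))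
    (hπ : ∀ x y : ℤ, π (mk (x, y)) = y) : Function.Exact ι π := by
  intro g
  obtain ⟨⟨x, y⟩, rfl⟩ := mk_surjective g
  rw [hπ, ZMod.intCast_toNat_eq_zero_iff hn]
  constructor
  · rintro ⟨k, rfl⟩
    refine ⟨(x - k * b : ℤ), ?_⟩
    rw [hι, QuotientAddGroup.eq]
    exact mem_iff.mpr ⟨0, k, by simp, by simp [mul_comm]⟩
  · rintro ⟨x', hx'⟩
    obtain ⟨x', rfl⟩ := ZMod.intCast_surjective x'
    rw [hι, QuotientAddGroup.eq, mem_iff] at hx'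
    obtain ⟨u, v, -, hv⟩ := hx'
    exact ⟨v, by simpa [mul_comm] using hv⟩

theorem surjective_of_apply_mk (hπ : ∀ x y : ℤ, π (mk (x, y)) = y) : Function.Surjective π :=
  fun y => by
    obtain ⟨y, rfl⟩ := ZMod.intCast_surjective y
    exact ⟨mk (0, y), hπ 0 y⟩

theorem exists_isUnit_of_addEquiv (hn : 0 < n)
    (hι : ∀ x : ℤ, ι x = mk (x, 0)) (hι' : ∀ x : ℤ, ι' x = mk (x, 0))
    (hπ : ∀ x y : ℤ, π (mk (x, y)) = y) (hπ' : ∀ x y : ℤ, π' (mk (x, y)) = y)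
    (α : ZMod m.toNat ≃+ ZMod m.toNat)
    (β : (ℤ × ℤ) ⧸ extensionSubgroup m n b ≃+ (ℤ × ℤ) ⧸ extensionSubgroup m n b')
    (γ : ZMod n.toNat ≃+ ZMod n.toNat)
    (hβι : ∀ x, β (ι x) = ι' (α x)) (hπβ : ∀ g, π' (β g) = γ (π g)) :
    ∃ z₁ z₂ : ℤ, IsUnit (z₁ : ZMod m.toNat) ∧ IsUnit (z₂ : ZMod n.toNat) ∧
      (Int.gcd n m : ℤ) ∣ z₂ * b' - z₁ * b := by
  obtain ⟨z₁, hz₁, hα⟩ := ZMod.exists_isUnit_intCast_addAut_eq_mul α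
  obtain ⟨z₂, hz₂, hγ⟩ := ZMod.exists_isUnit_intCast_addAut_eq_mul γ
  obtain ⟨⟨p, q⟩, hpq⟩ := mk_surjective (β (mk (0, 1)))
  have hq : n ∣ q - z₂ := by
    have h := hπβ (mk (0, 1))
    rw [← hpq, hπ', hπ, hγ, Int.cast_one, mul_one] at h
    rw [← ZMod.intCast_toNat_eq_zero_iff hn.le, Int.cast_sub, h, sub_self]
  have hp : n • (mk (p, q) : (ℤ × ℤ) ⧸ extensionSubgroup m n b') = mk (z₁ * -b, 0) := by
    rw [hpq, ← map_zsmul, zsmul_mk_zero_one, ← hι, hβι, hα, ← Int.cast_mul, hι']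
  refine ⟨z₁, z₂, hz₁, hz₂, ?_⟩
  rw [show z₂ * b' - z₁ * b = (z₁ * -b + q * b') - (q - z₂) * b' by ring]
  exact dvd_sub (gcd_dvd_of_zsmul_mk_eq hn.ne' hp)
    (((Int.gcd_dvd_left n m).trans hq).mul_right b')

theorem exists_addEquiv_of_isUnit (hm : 0 ≤ m) (hn : 0 < n)
    (hι : ∀ x : ℤ, ι x = mk (x, 0)) (hι' : ∀ x : ℤ, ι' x = mk (x, 0))
    (hπ : ∀ x y : ℤ, π (mk (x, y)) = y) (hπ' : ∀ x y : ℤ, π' (mk (x, y)) = y)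
    {z₁ z₂ : ℤ} (hz₁ : IsUnit (z₁ : ZMod m.toNat)) (hz₂ : IsUnit (z₂ : ZMod n.toNat))
    (h : (Int.gcd n m : ℤ) ∣ z₂ * b' - z₁ * b) :
    ∃ (α : ZMod m.toNat ≃+ ZMod m.toNat)
      (β : (ℤ × ℤ) ⧸ extensionSubgroup m n b ≃+ (ℤ × ℤ) ⧸ extensionSubgroup m n b')
      (γ : ZMod n.toNat ≃+ ZMod n.toNat),
      (∀ x, β (ι x) = ι' (α x)) ∧ (∀ g, π' (β g) = γ (π g)) := by
  obtain ⟨c, hc⟩ : ∃ c, m ∣ z₁ * b + c * n - z₂ * b' := by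
    obtain ⟨x, y, hxy⟩ := (gcd_dvd_iff_exists n m).mp (Int.coe_gcd n m ▸ h)
    exact ⟨x, -y, by linear_combination -hxy⟩
  let β := map _ _ (shear z₁ c z₂) (le_comap_shear hc)
  have hβ : ∀ x y, β (mk (x, y)) = mk (z₁ * x + c * y, z₂ * y) := fun _ _ => rfl
  let α := DistribMulAction.toAddEquiv (ZMod m.toNat) hz₁.unit
  let γ := DistribMulAction.toAddEquiv (ZMod n.toNat) hz₂.unit
  have hβι : ∀ x, β (ι x) = ι' (α x) := by
    intro x
    obtain ⟨x, rfl⟩ := ZMod.intCast_surjective x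
    rw [hι, hβ, mul_zero, add_zero, mul_zero, ← hι']
    simp [α, Units.smul_def]
  have hπβ : ∀ g, π' (β g) = γ (π g) := by
    intro g
    obtain ⟨⟨x, y⟩, rfl⟩ := mk_surjective g
    rw [hβ, hπ', hπ]
    simp [γ, Units.smul_def]
  have hβ_bij := AddMonoidHom.bijective_of_shortExact
    (injective_of_apply_intCast hm hn.ne' hι) (exact_of_apply_intCast hn.le hι hπ)
    (surjective_of_apply_mk hπ) (injective_of_apply_intCast hm hn.ne' hι')
    (exact_of_apply_intCast hn.le hι' hπ') (surjective_of_apply_mk hπ')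
    α.bijective γ.bijective (β := β) hβι hπβ
  exact ⟨α, AddEquiv.ofBijective β hβ_bij, γ, hβι, hπβ⟩

end extensionSubgroup

theorem extension_iso_iff_units_mul_general (a d b b' : ℤ)
    (ha : 2 ≤ a) (hd : 2 ≤ d)
    (N N' : AddSubgroup (ℤ × ℤ))
    (hN : N = AddSubgroup.closure {(d - 1, 0), (b, a - 1)})
    (hN' : N' = AddSubgroup.closure {(d - 1, 0), (b', a - 1)})
    (ι : ZMod (d - 1).toNat →+ (ℤ × ℤ) ⧸ N)
    (hι : ∀ x : ℤ, ι (x : ZMod (d - 1).toNat) = QuotientAddGroup.mk (x, (0 : ℤ)))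
    (ι' : ZMod (d - 1).toNat →+ (ℤ × ℤ) ⧸ N')
    (hι' : ∀ x : ℤ, ι' (x : ZMod (d - 1).toNat) = QuotientAddGroup.mk (x, (0 : ℤ)))
    (π : (ℤ × ℤ) ⧸ N →+ ZMod (a - 1).toNat)
    (hπ : ∀ x y : ℤ, π (QuotientAddGroup.mk (x, y)) = (y : ZMod (a - 1).toNat))
    (π' : (ℤ × ℤ) ⧸ N' →+ ZMod (a - 1).toNat)
    (hπ' : ∀ x y : ℤ, π' (QuotientAddGroup.mk (x, y)) = (y : ZMod (a - 1).toNat)) :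
    (∃ (α : ZMod (d - 1).toNat ≃+ ZMod (d - 1).toNat)
        (β : ((ℤ × ℤ) ⧸ N) ≃+ ((ℤ × ℤ) ⧸ N'))
        (γ : ZMod (a - 1).toNat ≃+ ZMod (a - 1).toNat),
      (∀ x : ZMod (d - 1).toNat, β (ι x) = ι' (α x)) ∧
      (∀ g : (ℤ × ℤ) ⧸ N, π' (β g) = γ (π g))) ↔
    (∃ z₁ z₂ : ℤ, IsUnit (z₁ : ZMod (d - 1).toNat) ∧
      IsUnit (z₂ : ZMod (a - 1).toNat) ∧
      ((z₁ * b : ℤ) : ZMod (Int.gcd (a - 1) (d - 1))) =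
        ((z₂ * b' : ℤ) : ZMod (Int.gcd (a - 1) (d - 1)))) := by
  subst hN hN'
  simp only [ZMod.intCast_eq_intCast_iff_dvd_sub]
  exact ⟨fun ⟨α, β, γ, hβι, hπβ⟩ =>
      extensionSubgroup.exists_isUnit_of_addEquiv (by omega) hι hι' hπ hπ' α β γ hβι hπβ,
    fun ⟨_, _, hz₁, hz₂, h⟩ =>
      extensionSubgroup.exists_addEquiv_of_isUnit (by omega) (by omega) hι hι' hπ hπ' hz₁ hz₂ h⟩

/-- Let `a, d ≥ 2` and `b, b' ≥ 1` be integers, let `N` (resp. `N'`) be the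
subgroup of `ℤ × ℤ` generated by `(d-1, 0)` and `(b, a-1)` (resp. `(d-1, 0)`
and `(b', a-1)`), let `G = (ℤ × ℤ)/N` and `G' = (ℤ × ℤ)/N'`, let `ι, ι'` be the
maps `ℤ/(d-1) → G, G'` induced by `x ↦ [(x, 0)]`, and let `π, π'` be the maps
induced by `(x, y) ↦ y mod (a-1)`.  Then there are group isomorphisms
`α : ℤ/(d-1) → ℤ/(d-1)`, `β : G → G'`, `γ : ℤ/(a-1) → ℤ/(a-1)` with
`β ∘ ι = ι' ∘ α` and `π' ∘ β = γ ∘ π` if and only if there are integers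
`z₁, z₂` with `z₁ mod (d-1)` a unit of `ℤ/(d-1)`, `z₂ mod (a-1)` a unit of
`ℤ/(a-1)`, and `z₁ * b ≡ z₂ * b' mod gcd (a-1) (d-1)`. -/
theorem extension_iso_iff_units_mul (a d b b' : ℤ)
    (ha : 2 ≤ a) (hd : 2 ≤ d) (hb : 1 ≤ b) (hb' : 1 ≤ b')
    (N N' : AddSubgroup (ℤ × ℤ))
    (hN : N = AddSubgroup.closure {(d - 1, 0), (b, a - 1)})
    (hN' : N' = AddSubgroup.closure {(d - 1, 0), (b', a - 1)})
    (ι : ZMod (d - 1).toNat →+ (ℤ × ℤ) ⧸ N)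
    (hι : ∀ x : ℤ, ι (x : ZMod (d - 1).toNat) = QuotientAddGroup.mk (x, (0 : ℤ)))
    (ι' : ZMod (d - 1).toNat →+ (ℤ × ℤ) ⧸ N')
    (hι' : ∀ x : ℤ, ι' (x : ZMod (d - 1).toNat) = QuotientAddGroup.mk (x, (0 : ℤ)))
    (π : (ℤ × ℤ) ⧸ N →+ ZMod (a - 1).toNat)
    (hπ : ∀ x y : ℤ, π (QuotientAddGroup.mk (x, y)) = (y : ZMod (a - 1).toNat))
    (π' : (ℤ × ℤ) ⧸ N' →+ ZMod (a - 1).toNat)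
    (hπ' : ∀ x y : ℤ, π' (QuotientAddGroup.mk (x, y)) = (y : ZMod (a - 1).toNat)) :
    (∃ (α : ZMod (d - 1).toNat ≃+ ZMod (d - 1).toNat)
        (β : ((ℤ × ℤ) ⧸ N) ≃+ ((ℤ × ℤ) ⧸ N'))
        (γ : ZMod (a - 1).toNat ≃+ ZMod (a - 1).toNat),
      (∀ x : ZMod (d - 1).toNat, β (ι x) = ι' (α x)) ∧
      (∀ g : (ℤ × ℤ) ⧸ N, π' (β g) = γ (π g))) ↔
    (∃ z₁ z₂ : ℤ, IsUnit (z₁ : ZMod (d - 1).toNat) ∧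
      IsUnit (z₂ : ZMod (a - 1).toNat) ∧
      ((z₁ * b : ℤ) : ZMod (Int.gcd (a - 1) (d - 1))) =
        ((z₂ * b' : ℤ) : ZMod (Int.gcd (a - 1) (d - 1)))) :=
  extension_iso_iff_units_mul_general a d b b' ha hd N N' hN hN' ι hι ι' hι' π hπ π' hπ'
end
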